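/- The minimum cost over all specialization functions with parameters n, k equals the minimum cost over all normalized specialization functions: min over φ ∈ Φ_n^k of cost(φ) equals min over X ⊆ [1,n-1] with |X| = k-1 of cost(φ_X^n). -/

import Mathlib

/-!
The normalization of a specialization function `φ` with range `Y` is `φ_X^n` for `X = Y \ {n}`:
since `φ n ≥ n` forces `n ∈ Y`, the value `φ_X^n i` is the least element of `Y` above `i`, hence
at most `φ i`, and a monotone `s` makes the normalized cost no larger. Conversely every `φ_X^n` is
itself a specialization function, so the two sets of costs have the same infimum.
-/

/-- The normalized specialization function `φ_X^n`. -/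
noncomputable def normSpec (n : ℕ) (X : Finset ℕ) (i : ℕ) : ℕ :=
  sInf {x : ℕ | x ∈ insert n X ∧ i ≤ x}

/-- Cost of a specialization function. -/
def cost (n : ℕ) (s f φ : ℕ → ℕ) : ℕ :=
  ∑ i ∈ Finset.Icc 1 n, s (φ i) * f i

/-- `φ` is a specialization function with parameters `n`, `k` and range set `Y`. -/
def IsSpecFun (n k : ℕ) (φ : ℕ → ℕ) (Y : Finset ℕ) : Prop :=
  Y ⊆ Finset.Icc 1 n ∧ Y.card = k ∧
  (∀ i ∈ Finset.Icc 1 n, φ i ∈ Y) ∧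
  (∀ x ∈ Y, ∃ i ∈ Finset.Icc 1 n, φ i = x) ∧
  (∀ i ∈ Finset.Icc 1 n, i ≤ φ i)

open Finset

lemma cost_le_cost {n : ℕ} {s : ℕ → ℕ} (hs : MonotoneOn s (Icc 1 n : Set ℕ)) (f : ℕ → ℕ)
    {φ ψ : ℕ → ℕ} (hψ : ∀ i ∈ Icc 1 n, ψ i ∈ Icc 1 n) (hφ : ∀ i ∈ Icc 1 n, φ i ∈ Icc 1 n)
    (hle : ∀ i ∈ Icc 1 n, ψ i ≤ φ i) :
    cost n s f ψ ≤ cost n s f φ :=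
  sum_le_sum fun i hi ↦ Nat.mul_le_mul_right (f i) (hs (hψ i hi) (hφ i hi) (hle i hi))

section normSpec

variable {n : ℕ} {X : Finset ℕ} {i : ℕ}

lemma normSpec_mem_and_le (hi : i ≤ n) : normSpec n X i ∈ insert n X ∧ i ≤ normSpec n X i :=
  Nat.sInf_mem (s := {x | x ∈ insert n X ∧ i ≤ x}) ⟨n, mem_insert_self n X, hi⟩

lemma normSpec_mem (hi : i ≤ n) : normSpec n X i ∈ insert n X :=
  (normSpec_mem_and_le hi).1

lemma le_normSpec (hi : i ≤ n) : i ≤ normSpec n X i :=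
  (normSpec_mem_and_le hi).2

lemma normSpec_le {y : ℕ} (hy : y ∈ insert n X) (hiy : i ≤ y) : normSpec n X i ≤ y :=
  Nat.sInf_le ⟨hy, hiy⟩

lemma normSpec_eq_self {x : ℕ} (hx : x ∈ insert n X) (hxn : x ≤ n) : normSpec n X x = x :=
  (normSpec_le hx le_rfl).antisymm (le_normSpec hxn)

lemma insert_subset_Icc (hn : 1 ≤ n) (hX : X ⊆ Icc 1 (n - 1)) : insert n X ⊆ Icc 1 n :=
  insert_subset (mem_Icc.mpr ⟨hn, le_rfl⟩) (hX.trans (Icc_subset_Icc_right (Nat.sub_le n 1)))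

lemma isSpecFun_normSpec {k : ℕ} (hn : 1 ≤ n) (hk : 1 ≤ k) (hX : X ⊆ Icc 1 (n - 1))
    (hcard : X.card = k - 1) : IsSpecFun n k (normSpec n X) (insert n X) := by
  have hnX : n ∉ X := fun h ↦ by have := mem_Icc.mp (hX h); omega
  refine ⟨insert_subset_Icc hn hX, ?_, fun i hi ↦ normSpec_mem (mem_Icc.mp hi).2,
    fun x hx ↦ ?_, fun i hi ↦ le_normSpec (mem_Icc.mp hi).2⟩
  · rw [card_insert_of_notMem hnX, hcard]
    omega
  · have hx' := insert_subset_Icc hn hX hx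
    exact ⟨x, hx', normSpec_eq_self hx (mem_Icc.mp hx').2⟩

end normSpec

namespace IsSpecFun

variable {n k : ℕ} {φ : ℕ → ℕ} {Y : Finset ℕ}

lemma apply_last (h : IsSpecFun n k φ Y) (hn : 1 ≤ n) : φ n = n := by
  have hnIcc : n ∈ Icc 1 n := mem_Icc.mpr ⟨hn, le_rfl⟩
  exact (mem_Icc.mp (h.1 (h.2.2.1 n hnIcc))).2.antisymm (h.2.2.2.2 n hnIcc)

lemma last_mem (h : IsSpecFun n k φ Y) (hn : 1 ≤ n) : n ∈ Y := by
  have := h.2.2.1 n (mem_Icc.mpr ⟨hn, le_rfl⟩)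
  rwa [h.apply_last hn] at this

lemma erase_subset_Icc (h : IsSpecFun n k φ Y) : Y.erase n ⊆ Icc 1 (n - 1) := fun y hy ↦ by
  have := mem_Icc.mp (h.1 (mem_of_mem_erase hy))
  have := ne_of_mem_erase hy
  exact mem_Icc.mpr (by omega)

lemma card_erase (h : IsSpecFun n k φ Y) (hn : 1 ≤ n) : (Y.erase n).card = k - 1 := by
  rw [card_erase_of_mem (h.last_mem hn), h.2.1]

lemma normSpec_erase_le (h : IsSpecFun n k φ Y) (hn : 1 ≤ n) {i : ℕ} (hi : i ∈ Icc 1 n) :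
    normSpec n (Y.erase n) i ≤ φ i := by
  have hφi : φ i ∈ insert n (Y.erase n) := by
    rw [insert_erase (h.last_mem hn)]
    exact h.2.2.1 i hi
  exact normSpec_le hφi (h.2.2.2.2 i hi)

lemma cost_normSpec_erase_le (h : IsSpecFun n k φ Y) (hn : 1 ≤ n) {s : ℕ → ℕ}
    (hs : MonotoneOn s (Icc 1 n : Set ℕ)) (f : ℕ → ℕ) :
    cost n s f (normSpec n (Y.erase n)) ≤ cost n s f φ :=
  cost_le_cost hs f
    (fun _ hi ↦ insert_subset_Icc hn h.erase_subset_Icc (normSpec_mem (mem_Icc.mp hi).2))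
    (fun i hi ↦ h.1 (h.2.2.1 i hi)) (fun _ hi ↦ h.normSpec_erase_le hn hi)

end IsSpecFun

theorem min_cost_eq_min_normSpec_cost_general (n k : ℕ) (hn : 1 ≤ n)
    (hk1 : 1 ≤ k) (s f : ℕ → ℕ)
    (hs : ∀ i ∈ Finset.Icc 1 n, ∀ j ∈ Finset.Icc 1 n, i ≤ j → s i ≤ s j) :
    sInf {c : ℕ | ∃ (φ : ℕ → ℕ) (Y : Finset ℕ),
        IsSpecFun n k φ Y ∧ cost n s f φ = c} =
    sInf {c : ℕ | ∃ X : Finset ℕ, X ⊆ Finset.Icc 1 (n - 1) ∧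
        X.card = k - 1 ∧ cost n s f (normSpec n X) = c} := by
  apply csInf_eq_csInf_of_forall_exists_le
  · rintro _ ⟨φ, Y, hφ, rfl⟩
    exact ⟨_, ⟨Y.erase n, hφ.erase_subset_Icc, hφ.card_erase hn, rfl⟩,
      hφ.cost_normSpec_erase_le hn hs f⟩
  · rintro _ ⟨X, hX, hcard, rfl⟩
    exact ⟨_, ⟨normSpec n X, insert n X, isSpecFun_normSpec hn hk1 hX hcard, rfl⟩, le_rfl⟩

/-- The minimum cost over all specialization functions with parameters `n`, `k`
equals the minimum cost over all normalized specialization functions `φ_X^n`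
with `X ⊆ [1, n-1]` and `|X| = k - 1`. -/
theorem min_cost_eq_min_normSpec_cost (n k : ℕ) (hn : 1 ≤ n)
    (hk1 : 1 ≤ k) (hkn : k ≤ n) (s f : ℕ → ℕ)
    (hs : ∀ i ∈ Finset.Icc 1 n, ∀ j ∈ Finset.Icc 1 n, i ≤ j → s i ≤ s j) :
    sInf {c : ℕ | ∃ (φ : ℕ → ℕ) (Y : Finset ℕ),
        IsSpecFun n k φ Y ∧ cost n s f φ = c} =
    sInf {c : ℕ | ∃ X : Finset ℕ, X ⊆ Finset.Icc 1 (n - 1) ∧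
        X.card = k - 1 ∧ cost n s f (normSpec n X) = c} :=
  min_cost_eq_min_normSpec_cost_general n k hn hk1 s f hs
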